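/- The set G = { M(α,β) : α, β ∈ K, α ≠ 0 } of n×n matrices M(α,β) with diagonal entries α, α², α⁴, …, α^{2^{n-1}}, first-row last-column entry β, entry a_{i,n}(α^{2^{i-1}} - α^{2^{n-1}}) in position (i,n) for 2 ≤ i ≤ n-1, and zeros elsewhere, is a subgroup of GL_n(K). -/
import Mathlib


open Matrix

/-- The automorphism matrix `M(α,β)`: dimension `n+1`, 0-based indices, diagonal
`(α, α², α⁴, …, α^{2^n})`, `(0,n)` entry `β`, `(i,n)` entry `a_i(α^{2^i} - α^{2^n})`
for `1 ≤ i ≤ n-1`, zeros elsewhere. -/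
def autoMat {K : Type*} [Field K] (n : ℕ) (a : Fin (n+1) → K) (α β : K) :
    Matrix (Fin (n+1)) (Fin (n+1)) K :=
  Matrix.of fun i j : Fin (n+1) =>
    if i = j then α ^ (2 ^ (i : ℕ))
    else if j = Fin.last n then
      (if i = 0 then β else a i * (α ^ (2 ^ (i : ℕ)) - α ^ (2 ^ n)))
    else 0

lemma autoMat_mul {K : Type*} [Field K] (n : ℕ) (a : Fin (n+1) → K) (α β γ δ : K) :
    autoMat n a α β * autoMat n a γ δ
      = autoMat n a (α * γ) (α * δ + β * γ ^ (2 ^ n)) := by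
  ext i j
  rw [Matrix.mul_apply]
  simp only [autoMat, Matrix.of_apply]
  by_cases hi : i = Fin.last n
  · subst hi
    rw [Finset.sum_eq_single (Fin.last n)
      (fun b _ hb => by
        have hb' : ¬(Fin.last n = b) := fun h => hb h.symm
        simp [hb', hb])
      (fun h => absurd (Finset.mem_univ _) h)]
    simp only [if_pos rfl, Fin.val_last]
    by_cases hj : Fin.last n = j
    · subst hj
      simp [Fin.val_last, mul_pow]
    · have hj' : j ≠ Fin.last n := fun h => hj h.symm
      simp [hj, hj']
  · have hsum : ∀ k ∈ Finset.univ, ((if i = k then α ^ (2 ^ (i : ℕ))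
        else if k = Fin.last n then (if i = 0 then β else a i * (α ^ (2 ^ (i : ℕ)) - α ^ (2 ^ n))) else 0) *
        (if k = j then γ ^ (2 ^ (k : ℕ))
         else if j = Fin.last n then (if k = 0 then δ else a k * (γ ^ (2 ^ (k : ℕ)) - γ ^ (2 ^ n))) else 0))
      = (if i = k then α ^ (2 ^ (i : ℕ)) *
          (if k = j then γ ^ (2 ^ (k : ℕ))
           else if j = Fin.last n then (if k = 0 then δ else a k * (γ ^ (2 ^ (k : ℕ)) - γ ^ (2 ^ n))) else 0) else 0)
        + (if k = Fin.last n then (if i = 0 then β else a i * (α ^ (2 ^ (i : ℕ)) - α ^ (2 ^ n))) *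
          (if k = j then γ ^ (2 ^ (k : ℕ))
           else if j = Fin.last n then (if k = 0 then δ else a k * (γ ^ (2 ^ (k : ℕ)) - γ ^ (2 ^ n))) else 0) else 0) := by
      intro k _
      by_cases h1 : i = k
      · subst h1; simp [hi]
      · by_cases h2 : k = Fin.last n
        · subst h2
          rw [if_neg h1, if_pos rfl, if_pos rfl, if_neg hi, zero_add]
        · simp [h1, h2]
    rw [Finset.sum_congr rfl hsum, Finset.sum_add_distrib,
      Finset.sum_ite_eq Finset.univ i, Finset.sum_ite_eq' Finset.univ (Fin.last n)]
    simp only [Finset.mem_univ, if_true, Fin.val_last]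
    by_cases hj : j = Fin.last n
    · subst hj
      simp only [if_neg hi, if_pos rfl]
      by_cases hi0 : i = 0
      · subst hi0
        simp only [if_pos rfl, Fin.val_zero, pow_zero, pow_one, if_true, eq_self_iff_true]
        try ring
      · simp only [if_neg hi0, mul_pow, if_true, eq_self_iff_true]
        try ring
    · have hj' : ¬(Fin.last n = j) := fun h => hj h.symm
      by_cases hij : i = j
      · subst hij
        simp [hj, hj', mul_pow, hi]
      · simp [hj, hj', hij]


lemma autoMat_one {K : Type*} [Field K] (n : ℕ) (a : Fin (n+1) → K) :
    autoMat n a 1 0 = 1 := by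
  ext i j
  simp only [autoMat, Matrix.of_apply, Matrix.one_apply, one_pow]
  split_ifs <;> simp

/-- `G = {M(α,β) : α ≠ 0, β ∈ K}` is a subgroup of `GLₙ(K)`. -/
theorem autoMat_subgroup {n : ℕ} (hn : 2 ≤ n) {K : Type*} [Field K] [CharZero K]
    (a : Fin (n+1) → K) :
    ∃ H : Subgroup (GL (Fin (n+1)) K),
      ∀ g : GL (Fin (n+1)) K,
        g ∈ H ↔ ∃ α β : K, α ≠ 0 ∧ (↑g : Matrix (Fin (n+1)) (Fin (n+1)) K) = autoMat n a α β := by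
  refine ⟨{ carrier := {g | ∃ α β : K, α ≠ 0 ∧ (↑g : Matrix (Fin (n+1)) (Fin (n+1)) K) = autoMat n a α β}
          , mul_mem' := ?_, one_mem' := ?_, inv_mem' := ?_ }, fun g => Iff.rfl⟩
  · rintro g₁ g₂ ⟨α, β, hα, h1⟩ ⟨γ, δ, hγ, h2⟩
    exact ⟨α * γ, α * δ + β * γ ^ (2 ^ n), mul_ne_zero hα hγ, by
      rw [Units.val_mul, h1, h2, autoMat_mul]⟩
  · exact ⟨1, 0, one_ne_zero, by
      rw [autoMat_one, Units.val_one]⟩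
  · rintro g ⟨α, β, hα, h1⟩
    refine ⟨α⁻¹, -β * α⁻¹ * (α⁻¹) ^ (2 ^ n), inv_ne_zero hα, ?_⟩
    have hmul : autoMat n a α β * autoMat n a α⁻¹ (-β * α⁻¹ * (α⁻¹) ^ (2 ^ n)) = 1 := by
      rw [autoMat_mul]
      have h2 : α * (-β * α⁻¹ * α⁻¹ ^ 2 ^ n) + β * (α⁻¹) ^ 2 ^ n = 0 := by
        field_simp
        ring
      rw [mul_inv_cancel₀ hα, h2, autoMat_one]
    have hinv : (↑g : Matrix (Fin (n+1)) (Fin (n+1)) K)⁻¹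
        = autoMat n a α⁻¹ (-β * α⁻¹ * (α⁻¹) ^ (2 ^ n)) :=
      Matrix.inv_eq_right_inv (by rw [h1]; exact hmul)
    rw [← hinv]
    exact Matrix.coe_units_inv g
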